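/- arXiv:1402.5078 — 6 statements merged into one kernel-verified Lean document; each statement's English description precedes it below -/
import Mathlib

section
/- For every k ≥ 1, the Ambainis–Sun function g_0 on 2k variables, defined so that g_0(x)=1 iff x satisfies one of the certificates c_0,...,c_{k-1} where c_i requires x_{2i+1}=x_{2i+2}=1, x_{2j+1}=0 for all j≠i, and x_{2j+2}=0 for j ∈ {i+1,...,i+⌊k/2⌋} (indices mod k), satisfies s_0(g_0) = 1. -/
open Finset

section Defs

variable {I : Type*} [Fintype I] [DecidableEq I]

/-- Flip a single bit of the input. -/
def flipBit (x : I → Bool) (i : I) : I → Bool := Function.update x i (!(x i))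

/-- Flip a block of bits of the input. -/
def flipSet (x : I → Bool) (B : Finset I) : I → Bool := fun j => if j ∈ B then !(x j) else x j

/-- Sensitivity of `f` at input `x`. -/
def sens (f : (I → Bool) → Bool) (x : I → Bool) : ℕ :=
  (univ.filter fun i => f (flipBit x i) ≠ f x).card

/-- Maximum sensitivity over 0-inputs. -/
noncomputable def s0 (f : (I → Bool) → Bool) : ℕ :=
  (univ.filter fun x => f x = false).sup (sens f)

/-- Maximum sensitivity over 1-inputs. -/
noncomputable def s1 (f : (I → Bool) → Bool) : ℕ :=
  (univ.filter fun x => f x = true).sup (sens f)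

/-- There exist `b` pairwise disjoint sensitive blocks for `f` at `x`. -/
def hasBS (f : (I → Bool) → Bool) (x : I → Bool) (b : ℕ) : Prop :=
  ∃ B : Fin b → Finset I, (∀ i j, i ≠ j → Disjoint (B i) (B j)) ∧
    ∀ i, f (flipSet x (B i)) ≠ f x

/-- Block sensitivity of `f` at `x`. -/
noncomputable def bs (f : (I → Bool) → Bool) (x : I → Bool) : ℕ := sSup {b | hasBS f x b}

/-- Maximum block sensitivity over 0-inputs. -/
noncomputable def bs0 (f : (I → Bool) → Bool) : ℕ :=
  (univ.filter fun x => f x = false).sup (bs f)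

/-- `y` agrees with `x` on the set `S`. -/
def agreesOn (S : Finset I) (x y : I → Bool) : Prop := ∀ i ∈ S, y i = x i

/-- The restriction of `x` to `S` forces the value `v`. -/
def IsCertOn (f : (I → Bool) → Bool) (S : Finset I) (x : I → Bool) (v : Bool) : Prop :=
  ∀ y, agreesOn S x y → f y = v

/-- Minimum size of a certificate of `f` at `x` (for the value `f x`). -/
noncomputable def certSize (f : (I → Bool) → Bool) (x : I → Bool) : ℕ :=
  sInf {m | ∃ S : Finset I, S.card = m ∧ IsCertOn f S x (f x)}

/-- Maximum certificate complexity over 1-inputs. -/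
noncomputable def C1 (f : (I → Bool) → Bool) : ℕ :=
  (univ.filter fun x => f x = true).sup (certSize f)

/-- `x` satisfies the partial assignment `c`. -/
def PAsat (c : I → Option Bool) (x : I → Bool) : Prop := ∀ i b, c i = some b → x i = b

/-- The partial assignment `c` is a 1-certificate of `f`. -/
def IsOneCert (f : (I → Bool) → Bool) (c : I → Option Bool) : Prop :=
  ∀ x, PAsat c x → f x = true

/-- The partial assignment `c` is a minimal 1-certificate of `f`. -/
def IsMinOneCert (f : (I → Bool) → Bool) (c : I → Option Bool) : Prop :=
  IsOneCert f c ∧ ∀ i, c i ≠ none → ¬ IsOneCert f (Function.update c i none)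

/-- Number of positions assigned by a partial assignment. -/
def PAsize (c : I → Option Bool) : ℕ := (univ.filter fun i => c i ≠ none).card

/-- Two partial assignments overlap: some position is assigned the same value by both. -/
def Overlap (c d : I → Option Bool) : Prop := ∃ i b, c i = some b ∧ d i = some b

/-- Number of contradictions between two partial assignments. -/
def contra (c d : I → Option Bool) : ℕ :=
  (univ.filter fun i =>
    (c i = some true ∧ d i = some false) ∨ (c i = some false ∧ d i = some true)).card

end Defs

/-- Total weight of the induced subgraph on `A` (each unordered edge counted once). -/
def gweight {V : Type*} [DecidableEq V] (w : V → V → ℕ) (A : Finset V) : ℚ :=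
  (∑ p ∈ A.offDiag, (w p.1 p.2 : ℚ)) / 2

/-- The index `j` lies in `{i+1, …, i+⌊k/2⌋}` taken modulo `k`. -/
def ASrange (k : ℕ) (i j : Fin k) : Prop :=
  (j : ℕ) ∈ (Finset.Icc 1 (k / 2)).image (fun d => ((i : ℕ) + d) % k)

instance (k : ℕ) (i j : Fin k) : Decidable (ASrange k i j) := by
  unfold ASrange; infer_instance

/-- The Ambainis–Sun certificate `c_i` on variables indexed by `Fin k × Fin 2`,
where `(j, 0)` stands for `x_{2j+1}` and `(j, 1)` stands for `x_{2j+2}`: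
it requires `x_{2i+1} = x_{2i+2} = 1`, `x_{2j+1} = 0` for `j ≠ i`, and
`x_{2j+2} = 0` for `j ∈ {i+1, …, i+⌊k/2⌋}` (mod `k`). -/
def ASCert (k : ℕ) (i : Fin k) (p : Fin k × Fin 2) : Option Bool :=
  if p.2 = 0 then (if p.1 = i then some true else some false)
  else if p.1 = i then some true
  else if ASrange k i p.1 then some false
  else none

instance {I : Type*} [Fintype I] [DecidableEq I] (c : I → Option Bool) (x : I → Bool) :
    Decidable (PAsat c x) := by
  unfold PAsat; infer_instance

/-- The Ambainis–Sun function on `2k` variables: `1` iff the input satisfies some `c_i`. -/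
def ASfun (k : ℕ) (x : Fin k × Fin 2 → Bool) : Bool :=
  decide (∃ i : Fin k, PAsat (ASCert k i) x)

lemma range_total (k : ℕ) (a b : Fin k) (h : (a:ℕ) ≠ (b:ℕ)) :
    ASrange k a b ∨ ASrange k b a := by
  have hA : (a:ℕ) < k := a.isLt
  have hB : (b:ℕ) < k := b.isLt
  simp only [ASrange, Finset.mem_image, Finset.mem_Icc]
  by_cases hAB : (a:ℕ) < (b:ℕ)
  · by_cases hd : (b:ℕ) - a ≤ k / 2
    · exact Or.inl ⟨(b:ℕ) - a, ⟨by omega, hd⟩, by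
        rw [show (a:ℕ) + ((b:ℕ) - a) = b by omega]; exact Nat.mod_eq_of_lt hB⟩
    · exact Or.inr ⟨k - ((b:ℕ) - a), ⟨by omega, by omega⟩, by
        rw [show (b:ℕ) + (k - ((b:ℕ) - a)) = k + a by omega, Nat.add_mod_left]
        exact Nat.mod_eq_of_lt hA⟩
  · by_cases hd : (a:ℕ) - b ≤ k / 2
    · exact Or.inr ⟨(a:ℕ) - b, ⟨by omega, hd⟩, by
        rw [show (b:ℕ) + ((a:ℕ) - b) = a by omega]; exact Nat.mod_eq_of_lt hA⟩
    · exact Or.inl ⟨k - ((a:ℕ) - b), ⟨by omega, by omega⟩, by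
        rw [show (a:ℕ) + (k - ((a:ℕ) - b)) = k + b by omega, Nat.add_mod_left]
        exact Nat.mod_eq_of_lt hB⟩

lemma three_contra (k : ℕ) (a b : Fin k) (hab : a ≠ b) :
    ∃ p1 p2 p3 : Fin k × Fin 2, p1 ≠ p2 ∧ p1 ≠ p3 ∧ p2 ≠ p3 ∧
      (∃ v, ASCert k a p1 = some v ∧ ASCert k b p1 = some (!v)) ∧
      (∃ v, ASCert k a p2 = some v ∧ ASCert k b p2 = some (!v)) ∧
      (∃ v, ASCert k a p3 = some v ∧ ASCert k b p3 = some (!v)) := by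
  have hba : b ≠ a := hab.symm
  rcases range_total k a b (fun e => hab (Fin.ext e)) with hr | hr
  · refine ⟨(a, 0), (b, 0), (b, 1), ?_, ?_, ?_, ?_, ?_, ?_⟩
    · simpa [Prod.ext_iff] using hab
    · simp [Prod.ext_iff]
    · simp [Prod.ext_iff]
    · exact ⟨true, by simp [ASCert], by simp [ASCert, hab]⟩
    · exact ⟨false, by simp [ASCert, hba], by simp [ASCert]⟩
    · exact ⟨false, by simp [ASCert, hba, hr], by simp [ASCert]⟩
  · refine ⟨(a, 0), (b, 0), (a, 1), ?_, ?_, ?_, ?_, ?_, ?_⟩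
    · simpa [Prod.ext_iff] using hab
    · simp [Prod.ext_iff]
    · simp [Prod.ext_iff]
    · exact ⟨true, by simp [ASCert], by simp [ASCert, hab]⟩
    · exact ⟨false, by simp [ASCert, hba], by simp [ASCert]⟩
    · exact ⟨true, by simp [ASCert], by simp [ASCert, hab, hr]⟩

lemma sens_le_one (k : ℕ) (x : Fin k × Fin 2 → Bool) (hx : ASfun k x = false) :
    sens (ASfun k) x ≤ 1 := by
  have hx' : ∀ i : Fin k, ¬ PAsat (ASCert k i) x := by
    simpa [ASfun] using hx
  rw [sens, Finset.card_le_one]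
  intro i hi j hj
  by_contra hij
  simp only [Finset.mem_filter, Finset.mem_univ, true_and, hx, ne_eq,
    Bool.not_eq_false] at hi hj
  obtain ⟨a, ha⟩ : ∃ a, PAsat (ASCert k a) (flipBit x i) := by simpa [ASfun] using hi
  obtain ⟨b, hb⟩ : ∃ b, PAsat (ASCert k b) (flipBit x j) := by simpa [ASfun] using hj
  have hia : ∀ p v, p ≠ i → ASCert k a p = some v → x p = v := by
    intro p v hp hc
    have := ha p v hc
    rwa [flipBit, Function.update_of_ne hp] at this
  have hjb : ∀ p v, p ≠ j → ASCert k b p = some v → x p = v := by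
    intro p v hp hc
    have := hb p v hc
    rwa [flipBit, Function.update_of_ne hp] at this
  have hab : a ≠ b := by
    rintro rfl
    apply hx' a
    intro p v hc
    by_cases hpi : p = i
    · exact hjb p v (by rw [hpi]; exact hij) hc
    · exact hia p v hpi hc
  obtain ⟨p1, p2, p3, h12, h13, h23, hc1, hc2, hc3⟩ := three_contra k a b hab
  have key : ∀ p : Fin k × Fin 2,
      (∃ v, ASCert k a p = some v ∧ ASCert k b p = some (!v)) → p = i ∨ p = j := by
    rintro p ⟨v, hca, hcb⟩
    by_contra hc
    push_neg at hc
    have h1 := hia p v hc.1 hca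
    have h2 := hjb p (!v) hc.2 hcb
    rw [h1] at h2
    cases v <;> simp at h2
  have k1 := key p1 hc1
  have k2 := key p2 hc2
  have k3 := key p3 hc3
  rcases k1 with rfl | rfl <;> rcases k2 with rfl | rfl <;> rcases k3 with rfl | rfl <;>
    simp_all

/-- For every `k ≥ 1`, the Ambainis–Sun function on `2k` variables
satisfies `s_0(g_0) = 1`. -/
theorem stmt_3 (k : ℕ) (hk : 1 ≤ k) : s0 (ASfun k) = 1 := by
  set i0 : Fin k := ⟨0, hk⟩ with hi0
  set x0 : Fin k × Fin 2 → Bool := fun p => decide (p = (i0, 0)) with hx0def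
  have h0 : ASfun k x0 = false := by
    simp only [ASfun, decide_eq_false_iff_not, not_exists]
    intro i hsat
    have h1 : x0 (i, 0) = true := hsat (i, 0) true (by simp [ASCert])
    have hieq : i = i0 := by simpa [hx0def, Prod.ext_iff] using h1
    have h2 : x0 (i, 1) = true := hsat (i, 1) true (by simp [ASCert])
    rw [hieq] at h2
    simp [hx0def, Prod.ext_iff] at h2
  have h1 : ASfun k (flipBit x0 (i0, 1)) = true := by
    simp only [ASfun, decide_eq_true_eq]
    refine ⟨i0, ?_⟩
    rintro ⟨pj, pt⟩ v hc
    have hpt : pt = 0 ∨ pt = 1 := by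
      rcases pt with ⟨pv, hpv⟩
      have : pv = 0 ∨ pv = 1 := by omega
      rcases this with rfl | rfl
      · exact Or.inl rfl
      · exact Or.inr rfl
    rcases hpt with rfl | rfl
    · have hp : ((pj, (0:Fin 2)) : Fin k × Fin 2) ≠ (i0, 1) := by
        simp [Prod.ext_iff]
      rw [flipBit, Function.update_of_ne hp]
      by_cases hpj : pj = i0
      · have hv : v = true := by simpa [ASCert, hpj] using hc
        simp [hx0def, hpj, hv]
      · have hv : v = false := by simpa [ASCert, hpj] using hc
        simp [hx0def, Prod.ext_iff, hpj, hv]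
    · by_cases hpj : pj = i0
      · have hv : v = true := by simpa [ASCert, hpj] using hc
        subst hpj
        rw [flipBit, Function.update_self]
        simp [hx0def, Prod.ext_iff, hv]
      · have hp : ((pj, (1:Fin 2)) : Fin k × Fin 2) ≠ (i0, 1) := by
          simp [Prod.ext_iff, hpj]
        rw [flipBit, Function.update_of_ne hp]
        by_cases hr : ASrange k i0 pj
        · have hv : v = false := by simpa [ASCert, hpj, hr] using hc
          simp [hx0def, Prod.ext_iff, hv]
        · simp [ASCert, hpj, hr] at hc
  refine le_antisymm ?_ ?_
  · refine Finset.sup_le ?_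
    intro y hy
    exact sens_le_one k y (by simpa using (Finset.mem_filter.mp hy).2)
  · have hmem : x0 ∈ Finset.univ.filter (fun y => ASfun k y = false) :=
      Finset.mem_filter.mpr ⟨Finset.mem_univ _, h0⟩
    refine le_trans ?_ (Finset.le_sup hmem)
    rw [sens, Nat.one_le_iff_ne_zero, ← Nat.pos_iff_ne_zero, Finset.card_pos]
    exact ⟨(i0, 1), Finset.mem_filter.mpr ⟨Finset.mem_univ _, by rw [h1, h0]; simp⟩⟩
end

section
/- For every k ≥ 1, the Ambainis–Sun function g_0 on 2k variables satisfies bs_0(g_0) = k: the all-zeros input has block sensitivity exactly k, witnessed by the blocks {2i+1, 2i+2} for i = 0,...,k−1, and no 0-input has larger block sensitivity. -/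
open Finset

lemma ASfun_eq_true_iff (k : ℕ) (x : Fin k × Fin 2 → Bool) :
    ASfun k x = true ↔ ∃ i : Fin k, PAsat (ASCert k i) x := by
  simp [ASfun]

lemma ASfun_zero (k : ℕ) : ASfun k (fun _ => false) = false := by
  rw [Bool.eq_false_iff]
  intro h
  obtain ⟨i, hi⟩ := (ASfun_eq_true_iff k _).1 h
  have := hi (i, 0) true (by simp [ASCert])
  simp at this

lemma ASfun_flip (k : ℕ) (i : Fin k) :
    ASfun k (flipSet (fun _ => false) ({(i, 0), (i, 1)} : Finset (Fin k × Fin 2))) = true := by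
  rw [ASfun_eq_true_iff]
  refine ⟨i, fun p b hp => ?_⟩
  have h2 : p.2 = 0 ∨ p.2 = 1 := by omega
  simp only [flipSet, Finset.mem_insert, Finset.mem_singleton]
  rcases h2 with h2 | h2
  · by_cases h1 : p.1 = i
    · have : p = (i, 0) := Prod.ext h1 h2
      subst this
      simp [ASCert] at hp
      simp [← hp]
    · simp [ASCert, h2, h1] at hp
      have : ¬ (p = (i,0) ∨ p = (i,1)) := by
        rintro (h | h) <;> exact h1 (by rw [h])
      simp [this, ← hp]
  · by_cases h1 : p.1 = i
    · have : p = (i, 1) := Prod.ext h1 h2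
      subst this
      simp [ASCert] at hp
      simp [← hp]
    · simp [ASCert, h2, h1] at hp
      by_cases hr : ASrange k i p.1
      · simp [hr] at hp
        have : ¬ (p = (i,0) ∨ p = (i,1)) := by
          rintro (h | h) <;> exact h1 (by rw [h])
        simp [this, ← hp]
      · simp [hr] at hp

lemma hasBS_le (k : ℕ) (x : Fin k × Fin 2 → Bool) (hx : ASfun k x = false)
    (b : ℕ) (hb : hasBS (ASfun k) x b) : b ≤ k := by
  obtain ⟨B, hdisj, hsens⟩ := hb
  have hsat : ∀ i : Fin b, ∃ j : Fin k, PAsat (ASCert k j) (flipSet x (B i)) := by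
    intro i
    have := hsens i
    rw [hx, Bool.ne_false_iff, ASfun_eq_true_iff] at this
    exact this
  choose φ hφ using hsat
  have hinj : Function.Injective φ := by
    intro i i' hii
    by_contra hne
    have hd := hdisj i i' hne
    have hsatx : PAsat (ASCert k (φ i)) x := by
      intro p v hp
      have h1 := hφ i p v hp
      have h2 := hφ i' p v (hii ▸ hp)
      simp only [flipSet] at h1 h2
      by_cases hi : p ∈ B i
      · have hi' : p ∉ B i' := Finset.disjoint_left.1 hd hi
        simp [hi] at h1; simp [hi'] at h2
        rw [h2] at h1; exact absurd h1 (by simp)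
      · by_cases hi' : p ∈ B i'
        · have : p ∉ B i := hi
          simp [hi'] at h2; simp [hi] at h1
          rw [h1] at h2; exact absurd h2 (by simp)
        · simpa [hi] using h1
    have : ASfun k x = true := (ASfun_eq_true_iff k x).2 ⟨φ i, hsatx⟩
    rw [hx] at this; exact absurd this (by simp)
  simpa using Fintype.card_le_of_injective φ hinj

lemma hasBS_zero_always {I : Type*} [Fintype I] [DecidableEq I]
    (f : (I → Bool) → Bool) (x : I → Bool) : hasBS f x 0 :=
  ⟨fun i => i.elim0, fun i => i.elim0, fun i => i.elim0⟩

lemma hasBS_k (k : ℕ) : hasBS (ASfun k) (fun _ => false) k := by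
  refine ⟨fun i => {(i, 0), (i, 1)}, ?_, ?_⟩
  · intro i j hij
    simp only [Finset.disjoint_left, Finset.mem_insert, Finset.mem_singleton]
    rintro p (rfl | rfl) <;> simp [Prod.ext_iff, hij]
  · intro i
    rw [ASfun_flip, ASfun_zero]
    simp

lemma bs_zero_eq (k : ℕ) : bs (ASfun k) (fun _ => false) = k := by
  have hbdd : BddAbove {b | hasBS (ASfun k) (fun _ => false) b} :=
    ⟨k, fun b hb => hasBS_le k _ (ASfun_zero k) b hb⟩
  apply le_antisymm
  · exact csSup_le ⟨k, hasBS_k k⟩ (fun b hb => hasBS_le k _ (ASfun_zero k) b hb)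
  · exact le_csSup hbdd (hasBS_k k)

/-- For every `k ≥ 1`, the Ambainis–Sun function satisfies `bs_0(g_0) = k`:
the all-zeros input has block sensitivity exactly `k`, witnessed by the blocks
`{2i+1, 2i+2}`, and no 0-input has larger block sensitivity. -/
theorem stmt_4 (k : ℕ) (hk : 1 ≤ k) :
    bs (ASfun k) (fun _ => false) = k ∧
    (∀ i : Fin k,
      ASfun k (flipSet (fun _ => false) ({(i, 0), (i, 1)} : Finset (Fin k × Fin 2))) = true) ∧
    bs0 (ASfun k) = k := by
  refine ⟨bs_zero_eq k, ASfun_flip k, ?_⟩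
  apply le_antisymm
  · apply Finset.sup_le
    intro x hx
    rw [Finset.mem_filter] at hx
    exact csSup_le ⟨0, hasBS_zero_always _ _⟩ (fun b hb => hasBS_le k x hx.2 b hb)
  · calc k = bs (ASfun k) (fun _ => false) := (bs_zero_eq k).symm
      _ ≤ _ := Finset.le_sup (by simp [ASfun_zero k])
end

section
/- Let f be a Boolean function that is not identically 1 and has k pairwise non-overlapping minimal 1-certificates such that each certificate has at most 2 contradictions in total with all the others. Then s_0(f) ≥ k. -/
open Finset

/-!
Non-overlapping certificates assign opposite values wherever two of them meet, so no position is
assigned by three of them, and every position a certificate shares with another one is a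
contradiction between them; hence each certificate shares at most two positions. By Hall's theorem
the shared positions can be given injectively one of their two certificates as a "loser"; letting
the target `t` follow the other certificate there (and the only one at unshared positions), each
certificate disagrees with `t` in at most one position.

Take a 0-input `x` with the fewest disagreements with `t`. Every certificate is violated by `x`.
If it is violated at a position where it agrees with `t`, flipping that bit gets closer to `t`, so
by minimality the flip is a 1-input; otherwise it is violated only at its single position off `t`,
and flipping that bit satisfies it. Certificates that do not overlap cannot be violated at the same
position in this way, so `x` has sensitivity at least `k`.
-/

open Function

theorem exists_injective_mem_of_card_filter_mem_le {ι α : Type*} [Fintype ι] [DecidableEq α]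
    (t : ι → Finset α) {d : ℕ} (hd : 0 < d) (ht : ∀ i, d ≤ #(t i))
    (hdeg : ∀ a, #{i | a ∈ t i} ≤ d) :
    ∃ g : ι → α, Injective g ∧ ∀ i, g i ∈ t i := by
  refine (all_card_le_biUnion_card_iff_exists_injective t).mp fun s => ?_
  have hcount := card_mul_le_card_mul (r := fun i a => a ∈ t i) (s := s) (t := s.biUnion t)
    (m := d) (n := d) (fun i hi => ?_) (fun a _ => (card_le_card (filter_subset_filter _
      (subset_univ s))).trans (hdeg a))
  · exact Nat.le_of_mul_le_mul_right hcount hd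
  · rw [bipartiteAbove, filter_mem_eq_inter, inter_eq_right.mpr (subset_biUnion_of_mem t hi)]
    exact ht i

section Certificates

variable {I ι : Type*}

theorem eq_not_of_not_overlap {c d : I → Option Bool} (h : ¬ Overlap c d) {p : I} {b b' : Bool}
    (hc : c p = some b) (hd : d p = some b') : b' = !b := by
  by_contra hb
  exact h ⟨p, b, hc, by rwa [Bool.ne_not.mp hb] at hd⟩

theorem eq_or_eq_or_eq_of_pairwise_not_overlap {c : ι → I → Option Bool}
    (hnov : Pairwise fun i j => ¬ Overlap (c i) (c j)) {p : I} {i j l : ι}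
    (hi : c i p ≠ none) (hj : c j p ≠ none) (hl : c l p ≠ none) :
    i = j ∨ i = l ∨ j = l := by
  obtain ⟨bi, hbi⟩ := Option.ne_none_iff_exists'.mp hi
  obtain ⟨bj, hbj⟩ := Option.ne_none_iff_exists'.mp hj
  obtain ⟨bl, hbl⟩ := Option.ne_none_iff_exists'.mp hl
  by_contra! ⟨hij, hil, hjl⟩
  have e₁ := eq_not_of_not_overlap (hnov hij) hbi hbj
  have e₂ := eq_not_of_not_overlap (hnov hil) hbi hbl
  have e₃ := eq_not_of_not_overlap (hnov hjl) hbj hbl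
  cases bi <;> simp_all

variable [Fintype I] [DecidableEq I] [Fintype ι] [DecidableEq ι]

def certsAt (c : ι → I → Option Bool) (p : I) : Finset ι := {i | c i p ≠ none}

theorem card_shared_le_sum_contra {c : ι → I → Option Bool}
    (hnov : Pairwise fun i j => ¬ Overlap (c i) (c j)) (i : ι) :
    #{p | c i p ≠ none ∧ 1 < #(certsAt c p)} ≤
      ∑ j ∈ univ.filter (· ≠ i), contra (c i) (c j) := by
  refine (card_le_card fun p hp => ?_).trans card_biUnion_le
  obtain ⟨hip, hshared⟩ := (mem_filter.mp hp).2
  obtain ⟨b, hb⟩ := Option.ne_none_iff_exists'.mp hip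
  obtain ⟨j, hj, hji⟩ := exists_mem_ne hshared i
  obtain ⟨b', hb'⟩ := Option.ne_none_iff_exists'.mp (mem_filter.mp hj).2
  have hbb' := eq_not_of_not_overlap (hnov hji.symm) hb hb'
  simp only [mem_biUnion, mem_filter, mem_univ, true_and]
  exact ⟨j, hji, by cases b <;> simp_all⟩

theorem exists_target_of_sum_contra_le_two {c : ι → I → Option Bool}
    (hnov : Pairwise fun i j => ¬ Overlap (c i) (c j))
    (hcon : ∀ i, ∑ j ∈ univ.filter (· ≠ i), contra (c i) (c j) ≤ 2) :
    ∃ t : I → Option Bool, ∀ i,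
      {p | ∃ b, c i p = some b ∧ t p ≠ some b}.Subsingleton := by
  obtain ⟨F, hFinj, hF⟩ := exists_injective_mem_of_card_filter_mem_le
    (fun q : {p // 1 < #(certsAt c p)} => certsAt c q) two_pos (fun q => q.2) fun i => by
      refine le_trans ?_ ((card_shared_le_sum_contra hnov i).trans (hcon i))
      refine card_le_card_of_injOn Subtype.val (fun q hq => ?_) Subtype.val_injective.injOn
      simp only [coe_filter, mem_univ, true_and] at hq ⊢
      exact ⟨(mem_filter.mp hq).2, q.2⟩
  have hwinner : ∀ p, ∃ v : Option Bool,
      ∀ i b, c i p = some b → (∀ h, F ⟨p, h⟩ ≠ i) → v = some b := by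
    intro p
    by_cases hw : ∃ i b, c i p = some b ∧ ∀ h, F ⟨p, h⟩ ≠ i
    · obtain ⟨i, b, hb, hFi⟩ := hw
      refine ⟨some b, fun j b' hb' hFj => ?_⟩
      obtain rfl | hij := eq_or_ne i j
      · rw [← hb, hb']
      have hshared : 1 < #(certsAt c p) :=
        one_lt_card.mpr ⟨i, by simp [certsAt, hb], j, by simp [certsAt, hb'], hij⟩
      have hFp := (mem_filter.mp (hF ⟨p, hshared⟩)).2
      rcases eq_or_eq_or_eq_of_pairwise_not_overlap (j := i) (l := j) hnov hFp
        (by simp [hb]) (by simp [hb']) with h | h | h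
      · exact absurd h (hFi hshared)
      · exact absurd h (hFj hshared)
      · exact absurd h hij
    · push Not at hw
      exact ⟨none, fun i b hb hFi => absurd (hw i b hb) (by simpa using hFi)⟩
  choose t ht using hwinner
  refine ⟨t, fun i p ⟨b, hb, htp⟩ q ⟨b', hb', htq⟩ => ?_⟩
  have hlost : ∀ {p b}, c i p = some b → t p ≠ some b → ∃ h, F ⟨p, h⟩ = i := by
    intro p b hb htp
    by_contra! hFi
    exact htp (ht _ _ _ hb hFi)
  obtain ⟨hp, hFp⟩ := hlost hb htp
  obtain ⟨hq, hFq⟩ := hlost hb' htq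
  exact congrArg Subtype.val (hFinj (hFp.trans hFq.symm))

end Certificates

section Sensitivity

variable {I ι : Type*} [Fintype I] [DecidableEq I]

def mismatch (t : I → Option Bool) (x : I → Bool) : ℕ := #{p | t p = some !(x p)}

theorem mismatch_flipBit_lt {t : I → Option Bool} {x : I → Bool} {p : I}
    (hp : t p = some !(x p)) : mismatch t (flipBit x p) < mismatch t x := by
  refine card_lt_card ⟨fun q hq => ?_, fun hsub => ?_⟩
  · rw [mem_filter] at hq ⊢
    obtain rfl | hqp := eq_or_ne q p
    · simp_all [flipBit]
    · simpa [flipBit, update_of_ne hqp] using hq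
  · have hp' := (mem_filter.mp (hsub (mem_filter.mpr ⟨mem_univ p, hp⟩))).2
    simp [flipBit, hp] at hp'

theorem sens_le_s0 {f : (I → Bool) → Bool} {x : I → Bool} (hx : f x = false) :
    sens f x ≤ s0 f :=
  le_sup (mem_filter.mpr ⟨mem_univ x, hx⟩)

theorem exists_disagree_flipBit_eq_true {f : (I → Bool) → Bool} {d t : I → Option Bool}
    (hd : IsOneCert f d) (hdt : {p | ∃ b, d p = some b ∧ t p ≠ some b}.Subsingleton)
    {x : I → Bool} (hx : f x = false)
    (hxmin : ∀ y, f y = false → mismatch t x ≤ mismatch t y) :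
    ∃ p, (∃ b, d p = some b ∧ x p ≠ b) ∧ f (flipBit x p) = true := by
  have hflip : ∀ p, t p = some !(x p) → f (flipBit x p) = true := fun p hp => by
    by_contra hf
    exact absurd (hxmin _ (by simpa using hf)) (not_le.mpr (mismatch_flipBit_lt hp))
  obtain ⟨p, b, hb, hxb⟩ : ∃ p b, d p = some b ∧ x p ≠ b := by
    by_contra! h
    simpa [hx] using hd x h
  by_cases hwon : ∃ q b, d q = some b ∧ x q ≠ b ∧ t q = some b
  · obtain ⟨q, b, hb, hxb, htq⟩ := hwon
    exact ⟨q, ⟨b, hb, hxb⟩, hflip q (by rwa [← Bool.eq_not.mpr hxb.symm])⟩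
  · push Not at hwon
    -- every disagreement of `x` with `d` is a disagreement of `d` with `t`, so `p` is the only one
    refine ⟨p, ⟨b, hb, hxb⟩, hd _ fun q b' hb' => ?_⟩
    obtain rfl | hqp := eq_or_ne q p
    · rw [Option.some_inj.mp (hb'.symm.trans hb), flipBit, update_self, Bool.eq_not.mpr hxb,
        Bool.not_not]
    · rw [flipBit, update_of_ne hqp]
      by_contra hxq
      exact hqp (hdt ⟨b', hb', hwon q b' hb' hxq⟩ ⟨b, hb, hwon p b hb hxb⟩)

theorem card_le_sens {f : (I → Bool) → Bool} [Fintype ι] {c : ι → I → Option Bool}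
    (hnov : Pairwise fun i j => ¬ Overlap (c i) (c j)) {x : I → Bool} (σ : ι → I)
    (hσ : ∀ i, ∃ b, c i (σ i) = some b ∧ x (σ i) ≠ b)
    (hflip : ∀ i, f (flipBit x (σ i)) ≠ f x) :
    Fintype.card ι ≤ sens f x := by
  refine card_le_card_of_injOn σ (fun i _ => by simpa using hflip i) fun i _ j _ hij => ?_
  by_contra hne
  obtain ⟨b, hb, hxb⟩ := hσ i
  obtain ⟨b', hb', hxb'⟩ := hσ j
  rw [hij] at hb hxb
  have : b = b' := by cases b <;> cases b' <;> simp_all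
  exact hnov hne ⟨σ j, b, hb, this ▸ hb'⟩

end Sensitivity

/-- If `f` is not identically 1 and has `k` pairwise non-overlapping minimal
1-certificates, each with at most 2 contradictions in total with all the others,
then `s_0(f) ≥ k`. -/
theorem stmt_8 {n k : ℕ} (f : (Fin n → Bool) → Bool)
    (hne : ¬ ∀ x, f x = true)
    (c : Fin k → Fin n → Option Bool)
    (hmin : ∀ i, IsMinOneCert f (c i))
    (hnov : ∀ i j, i ≠ j → ¬ Overlap (c i) (c j))
    (hcon : ∀ i, ∑ j ∈ Finset.univ.filter (fun j => j ≠ i), contra (c i) (c j) ≤ 2) :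
    k ≤ s0 f := by
  obtain ⟨t, ht⟩ := exists_target_of_sum_contra_le_two hnov hcon
  obtain ⟨x, hx, hxmin⟩ := exists_min_image {y | f y = false} (mismatch t)
    (by simpa [filter_nonempty_iff] using hne)
  have hx : f x = false := by simpa using hx
  choose σ hσ hflip using fun i =>
    exists_disagree_flipBit_eq_true (hmin i).1 (ht i) hx fun y hy => hxmin y (by simpa using hy)
  calc k = Fintype.card (Fin k) := (Fintype.card_fin k).symm
    _ ≤ sens f x := card_le_sens hnov σ hσ fun i => by rw [hflip i, hx]; decide
    _ ≤ s0 f := sens_le_s0 hx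
end

section
/- Let c be a minimal 1-certificate of a Boolean function f that is not identically 1, assigning positions S with |S| ≥ 1. Fix all bits of S but one according to c and the remaining bit opposite to c. Then the restricted function is not identically 1, and every 0-input of the restricted function is sensitive (in f) to that remaining bit. -/
open Finset

/-- Let `c` be a minimal 1-certificate of `f` (not identically 1) assigning
position `i` the value `b`. Fixing all assigned bits according to `c` except bit `i`,
which is fixed opposite to `c`: the restricted function is not identically 1, and every
0-input of the restriction is sensitive to bit `i`. -/
theorem stmt_9 {n : ℕ} (f : (Fin n → Bool) → Bool) (hne : ¬ ∀ x, f x = true)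
    (c : Fin n → Option Bool) (hmin : IsMinOneCert f c)
    (i : Fin n) (b : Bool) (hib : c i = some b) :
    (∃ x, PAsat (Function.update c i (some (!b))) x ∧ f x = false) ∧
      ∀ x, PAsat (Function.update c i (some (!b))) x → f x = false →
        f (flipBit x i) = true := by
  have hmin1 := hmin.1
  have hnot := hmin.2 i (by simp [hib])
  constructor
  · -- existence
    simp only [IsOneCert, not_forall] at hnot
    rcases hnot with ⟨x, hx⟩
    obtain ⟨hsat, hfx⟩ := hx
    have hxi : x i = !b := by
      by_contra h
      have hxi : x i = b := by
        cases hb : x i <;> cases b <;> simp_all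
      have : PAsat c x := by
        intro j v hj
        by_cases hji : j = i
        · subst hji; rw [hib] at hj; injection hj with h'; rw [← h']; exact hxi
        · exact hsat j v (by simpa [Function.update_of_ne hji] using hj)
      exact hfx (by simp [hmin1 x this])
    refine ⟨x, ?_, by simpa using hfx⟩
    intro j v hj
    by_cases hji : j = i
    · subst hji; simp only [Function.update_self] at hj; injection hj with h'; rw [← h']; exact hxi
    · exact hsat j v (by simpa [Function.update_of_ne hji] using hj)
  · intro x hsat hfx
    apply hmin1
    intro j v hj
    by_cases hji : j = i
    · subst hji
      rw [hib] at hj; injection hj with h'; subst h'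
      have hxi : x j = !b := hsat j (!b) (by simp)
      simp [flipBit, hxi]
    · have := hsat j v (by simp [Function.update_of_ne hji, hj])
      simpa [flipBit, Function.update_of_ne hji] using this
end

section
/- Let f : {0,1}^n → {0,1} with f not identically 1, let T ⊆ [n] be nonempty, and suppose the restriction of f obtained by fixing all bits of T to 1 is identically 1. Then among all restrictions of f obtained by fixing the bits of T (to arbitrary values) that are not identically 1, choose one fixing a maximal number of bits of T to 1. Then every 0-input of this restriction is sensitive to at least one bit of T: either flipping a bit of T fixed to 0, or flipping some designated bit, yields a 1-input. -/
open Finset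

/-- the "largest non-constant subfunction" argument. If fixing all bits of a
nonempty `T` to 1 makes `f` identically 1, and `a` is an assignment of `T` whose restriction
is not identically 1 with a maximal number of bits of `T` fixed to 1, then every 0-input of
this restriction is sensitive to some bit of `T`. -/
theorem stmt_10 {n : ℕ} (f : (Fin n → Bool) → Bool) (hne : ∃ x, f x = false)
    (T : Finset (Fin n)) (hT : T.Nonempty)
    (hall1 : ∀ x, (∀ i ∈ T, x i = true) → f x = true)
    (a : Fin n → Bool)
    (ha : ∃ x, (∀ i ∈ T, x i = a i) ∧ f x = false)
    (hmax : ∀ b : Fin n → Bool, (∃ x, (∀ i ∈ T, x i = b i) ∧ f x = false) →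
      (T.filter fun i => b i = true).card ≤ (T.filter fun i => a i = true).card) :
    ∀ x, (∀ i ∈ T, x i = a i) → f x = false → ∃ i ∈ T, f (flipBit x i) = true := by
  intro x hx hfx
  obtain ⟨i, hiT, hai⟩ : ∃ i ∈ T, a i = false := by
    by_contra h
    push_neg at h
    have h1 : f x = true := hall1 x (fun j hj => by
      rw [hx j hj]
      simpa using h j hj)
    simp [hfx] at h1
  refine ⟨i, hiT, ?_⟩
  by_contra hflip
  have hflipf : f (flipBit x i) = false := Bool.eq_false_iff.mpr hflip
  set b := Function.update a i true with hb
  have hagree : ∀ j ∈ T, flipBit x i j = b j := by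
    intro j hj
    by_cases hji : j = i
    · subst hji
      simp [flipBit, hb, hx j hj, hai]
    · simp [flipBit, hb, Function.update_of_ne hji, hx j hj]
  have hcard := hmax b ⟨flipBit x i, hagree, hflipf⟩
  have hset : T.filter (fun j => b j = true) = insert i (T.filter fun j => a j = true) := by
    ext j
    simp only [Finset.mem_filter, Finset.mem_insert, hb, Function.update]
    by_cases hji : j = i
    · subst hji; simp [hiT]
    · simp [hji]
  have hnotmem : i ∉ T.filter (fun j => a j = true) := by
    simp [hai]
  rw [hset, Finset.card_insert_of_notMem hnotmem] at hcard
  omega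
end

section
/- Let G be a complete weighted graph on k vertices with nonnegative integer edge weights, and suppose that for every induced subgraph G' of G and every minimum-weight induced subgraph H ⊆ G' of order s, each vertex of G' \ H has total edge weight at least 3 to H. Then every induced subgraph of order m has total weight at least (3/2)·m²/s − (3/2)·m. -/
open Finset

lemma gweight_nonneg {V : Type*} [DecidableEq V] (w : V → V → ℕ) (A : Finset V) :
    0 ≤ gweight w A := by
  unfold gweight; positivity

lemma sum_offDiag_eq {V : Type*} [DecidableEq V] (w : V → V → ℕ) (A : Finset V) :
    (∑ p ∈ A.offDiag, (w p.1 p.2 : ℚ)) =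
      (∑ a ∈ A, ∑ b ∈ A, (w a b : ℚ)) - ∑ a ∈ A, (w a a : ℚ) := by
  have h : (∑ p ∈ A.diag, (w p.1 p.2 : ℚ)) + ∑ p ∈ A.offDiag, (w p.1 p.2 : ℚ)
      = ∑ p ∈ A ×ˢ A, (w p.1 p.2 : ℚ) := by
    rw [← Finset.sum_union (Finset.disjoint_diag_offDiag _), Finset.diag_union_offDiag]
  rw [Finset.sum_product] at h
  rw [Finset.sum_diag] at h
  linarith

lemma gweight_split {V : Type*} [DecidableEq V] (w : V → V → ℕ)
    (hsymm : ∀ u v, w u v = w v u) {A H : Finset V} (hHA : H ⊆ A) :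
    gweight w A = gweight w H + gweight w (A \ H) +
      ∑ v ∈ A \ H, ∑ u ∈ H, (w v u : ℚ) := by
  unfold gweight
  rw [sum_offDiag_eq, sum_offDiag_eq, sum_offDiag_eq]
  have hsplit : ∀ f : V → ℚ, ∑ a ∈ A, f a = (∑ a ∈ A \ H, f a) + ∑ a ∈ H, f a :=
    fun f => (Finset.sum_sdiff hHA).symm
  rw [hsplit (fun a => ∑ b ∈ A, (w a b : ℚ)), hsplit (fun a => (w a a : ℚ))]
  have h1 : ∀ a, ∑ b ∈ A, (w a b : ℚ) = (∑ b ∈ A \ H, (w a b : ℚ)) + ∑ b ∈ H, (w a b : ℚ) :=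
    fun a => (Finset.sum_sdiff hHA).symm
  simp only [h1]
  rw [Finset.sum_add_distrib, Finset.sum_add_distrib]
  have hsym2 : ∑ a ∈ H, ∑ b ∈ A \ H, (w a b : ℚ) = ∑ v ∈ A \ H, ∑ u ∈ H, (w v u : ℚ) := by
    rw [Finset.sum_comm]
    exact Finset.sum_congr rfl fun a _ => Finset.sum_congr rfl fun b _ => by rw [hsymm]
  rw [hsym2]
  ring

/-- if in every induced subgraph `G'`, every vertex outside a minimum-weight
`s`-vertex induced subgraph `H ⊆ G'` has total edge weight at least 3 to `H`, then every
induced subgraph of order `m` has total weight at least `(3/2)m²/s − (3/2)m`. -/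
theorem stmt_11 {k : ℕ} (s : ℕ) (hs : 1 ≤ s) (w : Fin k → Fin k → ℕ)
    (hsymm : ∀ u v, w u v = w v u)
    (hcut : ∀ G' : Finset (Fin k), ∀ H ⊆ G', H.card = s →
      (∀ H' ⊆ G', H'.card = s → gweight w H ≤ gweight w H') →
      ∀ v ∈ G' \ H, 3 ≤ ∑ u ∈ H, w v u) :
    ∀ A : Finset (Fin k),
      gweight w A ≥ 3 / 2 * (A.card : ℚ) ^ 2 / (s : ℚ) - 3 / 2 * (A.card : ℚ) := by
  intro A
  induction A using Finset.strongInductionOn with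
  | _ A ih =>
    have hspos : (0 : ℚ) < s := by exact_mod_cast hs
    by_cases hm : A.card ≤ s
    · -- trivial case: RHS ≤ 0
      have hm' : (A.card : ℚ) ≤ s := by exact_mod_cast hm
      have h0 : (0 : ℚ) ≤ (A.card : ℚ) := by positivity
      have : 3 / 2 * (A.card : ℚ) ^ 2 / (s : ℚ) - 3 / 2 * (A.card : ℚ) ≤ 0 := by
        rw [sub_nonpos, div_le_iff₀ hspos]
        nlinarith
      linarith [gweight_nonneg w A]
    · push_neg at hm
      have hsA : s ≤ A.card := hm.le
      obtain ⟨H, hHmem, hHmin⟩ := Finset.exists_min_image (A.powersetCard s) (gweight w)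
        (Finset.powersetCard_nonempty.2 hsA)
      rw [Finset.mem_powersetCard] at hHmem
      obtain ⟨hHA, hHcard⟩ := hHmem
      have hmin' : ∀ H' ⊆ A, H'.card = s → gweight w H ≤ gweight w H' := by
        intro H' hH'A hH'card
        exact hHmin H' (Finset.mem_powersetCard.2 ⟨hH'A, hH'card⟩)
      have hcross : ∀ v ∈ A \ H, 3 ≤ ∑ u ∈ H, w v u := hcut A H hHA hHcard hmin'
      have hcrossQ : (3 : ℚ) * (A \ H).card ≤ ∑ v ∈ A \ H, ∑ u ∈ H, (w v u : ℚ) := by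
        calc (3 : ℚ) * (A \ H).card = ∑ _v ∈ A \ H, (3 : ℚ) := by
              rw [Finset.sum_const, nsmul_eq_mul, mul_comm]
          _ ≤ ∑ v ∈ A \ H, ∑ u ∈ H, (w v u : ℚ) := by
              apply Finset.sum_le_sum
              intro v hv
              have := hcross v hv
              calc (3 : ℚ) ≤ ((∑ u ∈ H, w v u : ℕ) : ℚ) := by exact_mod_cast this
                _ = ∑ u ∈ H, (w v u : ℚ) := by push_cast; ring
      have hHne : H.Nonempty := Finset.card_pos.1 (by omega)
      have hssub : A \ H ⊂ A := by
        obtain ⟨x, hx⟩ := hHne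
        refine Finset.ssubset_iff_of_subset (Finset.sdiff_subset) |>.2 ⟨x, hHA hx, ?_⟩
        simp [hx]
      have hIH := ih (A \ H) hssub
      have hcardsdiff : (A \ H).card = A.card - s := by rw [Finset.card_sdiff_of_subset hHA, hHcard]
      have hsplit := gweight_split w hsymm hHA
      have hgH := gweight_nonneg w H
      -- algebra
      set m : ℚ := (A.card : ℚ) with hmdef
      have hx : ((A \ H).card : ℚ) = m - s := by
        rw [hcardsdiff]
        have : (s : ℕ) ≤ A.card := hsA
        push_cast [Nat.cast_sub this]
        ring
      rw [hx] at hIH hcrossQ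
      rw [ge_iff_le, ← sub_nonneg] at hIH ⊢
      have key : gweight w A - (3 / 2 * m ^ 2 / s - 3 / 2 * m)
          ≥ gweight w (A \ H) - (3 / 2 * (m - s) ^ 2 / s - 3 / 2 * (m - s)) := by
        rw [hsplit]
        have hident : 3 / 2 * m ^ 2 / s - 3 / 2 * m
            = (3 / 2 * (m - s) ^ 2 / s - 3 / 2 * (m - s)) + 3 * (m - s) := by
          field_simp
          ring
        rw [hident]
        linarith
      linarith
end
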